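/- arXiv:2408.13245 — 2 statements merged into one kernel-verified Lean document; each statement's English description precedes it below -/
import Mathlib

section
/- Let u be a smooth divergence-free vector field on the closed strip Ω = ℝ × [0,1], with u·n = 0 on the line y = 0, u = 0 on the line y = 1, and compact support in ℝ × [0,1). Then ‖∇u‖²_{L²(Ω)} ≤ 8‖Du‖²_{L²(Ω)}, where Du is the symmetric gradient. -/
open MeasureTheory Set Filter Real

noncomputable section

def dot2 (a b : ℝ × ℝ) : ℝ := a.1 * b.1 + a.2 * b.2

def nsq2 (a : ℝ × ℝ) : ℝ := a.1 ^ 2 + a.2 ^ 2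

def pdX (u : ℝ × ℝ → ℝ × ℝ) (p : ℝ × ℝ) : ℝ × ℝ := fderiv ℝ u p (1, 0)

def pdY (u : ℝ × ℝ → ℝ × ℝ) (p : ℝ × ℝ) : ℝ × ℝ := fderiv ℝ u p (0, 1)

/-- squared Frobenius norm of the symmetric gradient `Du` of a 2D vector field -/
def symGradSq (u : ℝ × ℝ → ℝ × ℝ) (p : ℝ × ℝ) : ℝ :=
  (pdX u p).1 ^ 2 + (pdY u p).2 ^ 2 + (1/2) * ((pdX u p).2 + (pdY u p).1) ^ 2

/-- squared Frobenius norm of the full gradient `∇u` -/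
def gradSq (u : ℝ × ℝ → ℝ × ℝ) (p : ℝ × ℝ) : ℝ := nsq2 (pdX u p) + nsq2 (pdY u p)

/-- the channel `Ω = ℝ × (0,1)` -/
def OmegaCh : Set (ℝ × ℝ) := (univ : Set ℝ) ×ˢ Ioo (0:ℝ) 1

/-- the doubled strip `ℝ × (-1,1)` -/
def StripR : Set (ℝ × ℝ) := (univ : Set ℝ) ×ˢ Ioo (-1:ℝ) 1

/-- compact support contained in `ℝ × [0, L)` (relative to the closed strip) -/
def suppStrip (L : ℝ) (u : ℝ × ℝ → ℝ × ℝ) : Prop :=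
  ∃ K : Set (ℝ × ℝ), IsCompact K ∧ K ⊆ (univ : Set ℝ) ×ˢ Ico 0 L ∧
    ∀ p ∈ ((univ : Set ℝ) ×ˢ Icc 0 L) \ K, u p = 0

/-- the class `𝒱(Ω)`: smooth, divergence free, tangential on `Γ`, zero at `y = 1`,
compact support in `Ω ∪ Γ` -/
def memV (u : ℝ × ℝ → ℝ × ℝ) : Prop :=
  ContDiff ℝ (⊤ : ℕ∞) u ∧ (∀ p ∈ OmegaCh, (pdX u p).1 + (pdY u p).2 = 0) ∧
  (∀ x : ℝ, (u (x, 0)).2 = 0) ∧ (∀ x : ℝ, u (x, 1) = 0) ∧ suppStrip 1 u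

/-- membership in `V`, the closure of `𝒱(Ω)` in the `V`-norm
`‖u‖_V² = ‖Du‖²_{L²(Ω)} + α‖u‖²_{L²(Γ)}` (together with the induced `L²` convergences) -/
def inV (α : ℝ) (u : ℝ × ℝ → ℝ × ℝ) : Prop :=
  ∃ v : ℕ → ℝ × ℝ → ℝ × ℝ, (∀ n, memV (v n)) ∧
    Tendsto (fun n => ∫ p in OmegaCh, symGradSq (fun q => v n q - u q) p) atTop (nhds 0) ∧
    Tendsto (fun n => ∫ p in OmegaCh, nsq2 (v n p - u p)) atTop (nhds 0) ∧
    Tendsto (fun n => α * ∫ x : ℝ, nsq2 (v n (x, 0) - u (x, 0))) atTop (nhds 0)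


lemma my_setIntegral_zero_off {A B : Set (ℝ×ℝ)} (hA : MeasurableSet A) (hB : MeasurableSet B)
    (hBA : B ⊆ A) (h : ℝ×ℝ → ℝ) (hz : ∀ p ∈ A \ B, h p = 0) :
    ∫ p in A, h p = ∫ p in B, h p := by
  rw [← integral_indicator hA, ← integral_indicator hB]
  congr 1
  funext p
  by_cases hpB : p ∈ B
  · simp [indicator, hpB, hBA hpB]
  · by_cases hpA : p ∈ A
    · simp [indicator, hpA, hpB, hz p ⟨hpA, hpB⟩]
    · simp [indicator, hpA, hpB]

lemma my_integrableOn {A K : Set (ℝ×ℝ)} (hA : MeasurableSet A) (hK : IsCompact K)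
    (h : ℝ×ℝ → ℝ) (hc : Continuous h) (hz : ∀ p ∈ A \ K, h p = 0) :
    IntegrableOn h A := by
  have h1 : IntegrableOn h (A ∩ K) :=
    (hc.continuousOn.integrableOn_compact hK).mono_set inter_subset_right
  have h2 : IntegrableOn h (A \ K) :=
    (integrableOn_zero (μ := volume)).congr_fun (fun p hp => (hz p hp).symm)
      (hA.diff hK.measurableSet)
  have := h1.union h2
  rwa [inter_union_diff] at this

lemma key_ibp (u : ℝ × ℝ → ℝ × ℝ) (hu : memV u) :
    ∫ p in OmegaCh, ((fderiv ℝ u p (1,0)).2 * (fderiv ℝ u p (0,1)).1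
      - (fderiv ℝ u p (1,0)).1 * (fderiv ℝ u p (0,1)).2) = 0 := by
  obtain ⟨hsm, hdiv, h0, h1, K, hKc, hKsub, hKz⟩ := hu
  have hsm' : ContDiff ℝ ((⊤:ℕ∞) : WithTop ℕ∞) u := hsm.of_le (by simp)
  have hd1 : Differentiable ℝ u := hsm'.differentiable (by norm_num)
  have hsmD : ContDiff ℝ ((⊤:ℕ∞) : WithTop ℕ∞) (fderiv ℝ u) := (contDiff_infty_iff_fderiv.mp hsm').2
  have hd2 : Differentiable ℝ (fderiv ℝ u) := hsmD.differentiable (by norm_num)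
  have hcD : Continuous (fderiv ℝ u) := hsmD.continuous
  have hcD2 : Continuous (fderiv ℝ (fderiv ℝ u)) := ((contDiff_infty_iff_fderiv.mp hsmD).2).continuous
  have hschwarz : ∀ p v w, fderiv ℝ (fderiv ℝ u) p v w = fderiv ℝ (fderiv ℝ u) p w v :=
    fun p v w => second_derivative_symmetric (fun y => (hd1 y).hasFDerivAt)
      ((hd2 p).hasFDerivAt) v w
  -- radius
  obtain ⟨R0, hR0⟩ := hKc.isBounded.subset_closedBall 0
  set R : ℝ := |R0| + 1 with hRdef
  have hRpos : (0:ℝ) < R := by positivity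
  have hnotK : ∀ p : ℝ × ℝ, R ≤ |p.1| → p ∉ K := by
    intro p hp hpK
    have h := hR0 hpK
    rw [Metric.mem_closedBall, dist_zero_right, Prod.norm_def] at h
    have h1 : |p.1| ≤ R0 := le_trans (le_max_left _ _) h
    have := le_abs_self R0
    linarith
  have hout : ∀ p : ℝ × ℝ, R ≤ |p.1| → p.2 ∈ Icc (0:ℝ) 1 → u p = 0 := by
    intro p hp hy
    exact hKz p ⟨⟨trivial, hy⟩, hnotK p hp⟩
  -- derivatives
  have hdf : ∀ (v : ℝ×ℝ) (p : ℝ×ℝ), HasFDerivAt (fun q => (u q).2 * (fderiv ℝ u q v).1)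
      ((u p).2 • ((ContinuousLinearMap.fst ℝ ℝ ℝ).comp
          ((ContinuousLinearMap.apply ℝ (ℝ×ℝ) v).comp (fderiv ℝ (fderiv ℝ u) p)))
        + (fderiv ℝ u p v).1 • ((ContinuousLinearMap.snd ℝ ℝ ℝ).comp (fderiv ℝ u p))) p := by
    intro v p
    have ha : HasFDerivAt (fun q => (u q).2) ((ContinuousLinearMap.snd ℝ ℝ ℝ).comp (fderiv ℝ u p)) p :=
      (ContinuousLinearMap.snd ℝ ℝ ℝ).hasFDerivAt.comp p (hd1 p).hasFDerivAt
    have hb : HasFDerivAt (fun q => (fderiv ℝ u q v).1)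
        ((ContinuousLinearMap.fst ℝ ℝ ℝ).comp
          ((ContinuousLinearMap.apply ℝ (ℝ×ℝ) v).comp (fderiv ℝ (fderiv ℝ u) p))) p :=
      (ContinuousLinearMap.fst ℝ ℝ ℝ).hasFDerivAt.comp p
        ((ContinuousLinearMap.apply ℝ (ℝ×ℝ) v).hasFDerivAt.comp p (hd2 p).hasFDerivAt)
    exact ha.mul hb
  have hcf : ∀ v : ℝ×ℝ, Continuous (fun q => (u q).2 * (fderiv ℝ u q v).1) :=
    fun v => (continuous_snd.comp hsm'.continuous).mul
      (continuous_fst.comp ((ContinuousLinearMap.apply ℝ (ℝ×ℝ) v).continuous.comp hcD))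
  -- pointwise identity for the divergence integrand
  have hptw : ∀ p : ℝ×ℝ,
      ((u p).2 • ((ContinuousLinearMap.fst ℝ ℝ ℝ).comp
          ((ContinuousLinearMap.apply ℝ (ℝ×ℝ) ((0:ℝ),(1:ℝ))).comp (fderiv ℝ (fderiv ℝ u) p)))
        + (fderiv ℝ u p (0,1)).1 • ((ContinuousLinearMap.snd ℝ ℝ ℝ).comp (fderiv ℝ u p))) (1,0)
      + (-((u p).2 • ((ContinuousLinearMap.fst ℝ ℝ ℝ).comp
          ((ContinuousLinearMap.apply ℝ (ℝ×ℝ) ((1:ℝ),(0:ℝ))).comp (fderiv ℝ (fderiv ℝ u) p)))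
        + (fderiv ℝ u p (1,0)).1 • ((ContinuousLinearMap.snd ℝ ℝ ℝ).comp (fderiv ℝ u p)))) (0,1)
      = (fderiv ℝ u p (1,0)).2 * (fderiv ℝ u p (0,1)).1
        - (fderiv ℝ u p (1,0)).1 * (fderiv ℝ u p (0,1)).2 := by
    intro p
    simp only [ContinuousLinearMap.add_apply, ContinuousLinearMap.neg_apply,
      ContinuousLinearMap.smul_apply, ContinuousLinearMap.comp_apply,
      ContinuousLinearMap.apply_apply, ContinuousLinearMap.coe_fst',
      ContinuousLinearMap.coe_snd', smul_eq_mul]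
    rw [hschwarz p (1,0) (0,1)]
    ring
  have hab : ((-R, 0) : ℝ×ℝ) ≤ (R, 1) := Prod.mk_le_mk.mpr ⟨by linarith, by norm_num⟩
  have Hi : IntegrableOn (fun p : ℝ×ℝ =>
      ((u p).2 • ((ContinuousLinearMap.fst ℝ ℝ ℝ).comp
          ((ContinuousLinearMap.apply ℝ (ℝ×ℝ) ((0:ℝ),(1:ℝ))).comp (fderiv ℝ (fderiv ℝ u) p)))
        + (fderiv ℝ u p (0,1)).1 • ((ContinuousLinearMap.snd ℝ ℝ ℝ).comp (fderiv ℝ u p))) (1,0)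
      + (-((u p).2 • ((ContinuousLinearMap.fst ℝ ℝ ℝ).comp
          ((ContinuousLinearMap.apply ℝ (ℝ×ℝ) ((1:ℝ),(0:ℝ))).comp (fderiv ℝ (fderiv ℝ u) p)))
        + (fderiv ℝ u p (1,0)).1 • ((ContinuousLinearMap.snd ℝ ℝ ℝ).comp (fderiv ℝ u p)))) (0,1))
      (Icc ((-R,0):ℝ×ℝ) (R,1)) := by
    apply ContinuousOn.integrableOn_compact isCompact_Icc
    apply Continuous.continuousOn
    have hc1 : Continuous fun p : ℝ×ℝ => (fderiv ℝ u p (1,0)).2 * (fderiv ℝ u p (0,1)).1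
        - (fderiv ℝ u p (1,0)).1 * (fderiv ℝ u p (0,1)).2 := by
      apply Continuous.sub
      · exact (continuous_snd.comp ((ContinuousLinearMap.apply ℝ (ℝ×ℝ) ((1:ℝ),(0:ℝ))).continuous.comp hcD)).mul
          (continuous_fst.comp ((ContinuousLinearMap.apply ℝ (ℝ×ℝ) ((0:ℝ),(1:ℝ))).continuous.comp hcD))
      · exact (continuous_fst.comp ((ContinuousLinearMap.apply ℝ (ℝ×ℝ) ((1:ℝ),(0:ℝ))).continuous.comp hcD)).mul
          (continuous_snd.comp ((ContinuousLinearMap.apply ℝ (ℝ×ℝ) ((0:ℝ),(1:ℝ))).continuous.comp hcD))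
    have : (fun p : ℝ×ℝ =>
      ((u p).2 • ((ContinuousLinearMap.fst ℝ ℝ ℝ).comp
          ((ContinuousLinearMap.apply ℝ (ℝ×ℝ) ((0:ℝ),(1:ℝ))).comp (fderiv ℝ (fderiv ℝ u) p)))
        + (fderiv ℝ u p (0,1)).1 • ((ContinuousLinearMap.snd ℝ ℝ ℝ).comp (fderiv ℝ u p))) (1,0)
      + (-((u p).2 • ((ContinuousLinearMap.fst ℝ ℝ ℝ).comp
          ((ContinuousLinearMap.apply ℝ (ℝ×ℝ) ((1:ℝ),(0:ℝ))).comp (fderiv ℝ (fderiv ℝ u) p)))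
        + (fderiv ℝ u p (1,0)).1 • ((ContinuousLinearMap.snd ℝ ℝ ℝ).comp (fderiv ℝ u p)))) (0,1))
      = fun p : ℝ×ℝ => (fderiv ℝ u p (1,0)).2 * (fderiv ℝ u p (0,1)).1
        - (fderiv ℝ u p (1,0)).1 * (fderiv ℝ u p (0,1)).2 := funext hptw
    rw [this]
    exact hc1
  have hbig := MeasureTheory.integral_divergence_prod_Icc_of_hasFDerivAt_off_countable_of_le
      (fun q => (u q).2 * (fderiv ℝ u q (0,1)).1)
      (fun q => -((u q).2 * (fderiv ℝ u q (1,0)).1))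
      (fun p => (u p).2 • ((ContinuousLinearMap.fst ℝ ℝ ℝ).comp
          ((ContinuousLinearMap.apply ℝ (ℝ×ℝ) ((0:ℝ),(1:ℝ))).comp (fderiv ℝ (fderiv ℝ u) p)))
        + (fderiv ℝ u p (0,1)).1 • ((ContinuousLinearMap.snd ℝ ℝ ℝ).comp (fderiv ℝ u p)))
      (fun p => -((u p).2 • ((ContinuousLinearMap.fst ℝ ℝ ℝ).comp
          ((ContinuousLinearMap.apply ℝ (ℝ×ℝ) ((1:ℝ),(0:ℝ))).comp (fderiv ℝ (fderiv ℝ u) p)))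
        + (fderiv ℝ u p (1,0)).1 • ((ContinuousLinearMap.snd ℝ ℝ ℝ).comp (fderiv ℝ u p))))
      (-R, 0) (R, 1) hab ∅ countable_empty
      (hcf (0,1)).continuousOn ((hcf (1,0)).neg).continuousOn
      (fun x _ => hdf (0,1) x) (fun x _ => (hdf (1,0) x).neg) Hi
  -- boundary terms vanish
  have htop : (fun x : ℝ => -((u (x,(1:ℝ))).2 * (fderiv ℝ u (x,1) (1,0)).1)) = fun _ => (0:ℝ) := by
    funext x; rw [h1 x]; simp
  have hbot : (fun x : ℝ => -((u (x,(0:ℝ))).2 * (fderiv ℝ u (x,0) (1,0)).1)) = fun _ => (0:ℝ) := by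
    funext x; rw [h0 x]; simp
  have hsideR : ∫ y in (0:ℝ)..1, (u ((R:ℝ),y)).2 * (fderiv ℝ u (R,y) (0,1)).1 = 0 := by
    rw [intervalIntegral.integral_congr (g := fun _ => (0:ℝ))]
    · simp
    · intro y hy
      rw [uIcc_of_le (by norm_num : (0:ℝ) ≤ 1)] at hy
      have := hout (R, y) (by simp [abs_of_pos hRpos]) hy
      simp [this]
  have hsideL : ∫ y in (0:ℝ)..1, (u ((-R:ℝ),y)).2 * (fderiv ℝ u (-R,y) (0,1)).1 = 0 := by
    rw [intervalIntegral.integral_congr (g := fun _ => (0:ℝ))]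
    · simp
    · intro y hy
      rw [uIcc_of_le (by norm_num : (0:ℝ) ≤ 1)] at hy
      have := hout (-R, y) (by rw [abs_neg]; simp [abs_of_pos hRpos]) hy
      simp [this]
  rw [htop, hbot] at hbig
  simp only [intervalIntegral.integral_const, smul_zero, sub_zero, zero_sub, neg_zero, zero_add] at hbig
  rw [hsideR, hsideL, sub_zero] at hbig
  -- identity over the rectangle
  have hIccEq : ∫ p in Icc ((-R,0):ℝ×ℝ) (R,1), ((fderiv ℝ u p (1,0)).2 * (fderiv ℝ u p (0,1)).1
      - (fderiv ℝ u p (1,0)).1 * (fderiv ℝ u p (0,1)).2) = 0 := by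
    have heq := setIntegral_congr_fun (μ := volume)
      (measurableSet_Icc (a := ((-R,0):ℝ×ℝ)) (b := ((R,1):ℝ×ℝ)))
      (fun p (_ : p ∈ Icc ((-R,0):ℝ×ℝ) ((R,1):ℝ×ℝ)) => (hptw p).symm)
    exact heq.trans hbig
  -- vanishing of the gradient off K inside the strip
  have hzoff : ∀ p : ℝ×ℝ, p.2 ∈ Ioo (0:ℝ) 1 → p ∉ K → fderiv ℝ u p = 0 := by
    intro p hp hpK
    have hopen : IsOpen ({q : ℝ×ℝ | q.2 ∈ Ioo (0:ℝ) 1} \ K) :=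
      (isOpen_Ioo.preimage continuous_snd).sdiff hKc.isClosed
    have hev : u =ᶠ[nhds p] (fun _ => 0) :=
      eventually_of_mem (hopen.mem_nhds ⟨hp, hpK⟩)
        (fun q hq => hKz q ⟨⟨trivial, Ioo_subset_Icc_self hq.1⟩, hq.2⟩)
    rw [hev.fderiv_eq]
    exact fderiv_const_apply 0
  have hOmega : MeasurableSet OmegaCh := MeasurableSet.univ.prod measurableSet_Ioo
  have hBmeas : MeasurableSet (Icc (-R) R ×ˢ Ioo (0:ℝ) 1) := measurableSet_Icc.prod measurableSet_Ioo
  have hstep1 : ∫ p in OmegaCh, ((fderiv ℝ u p (1,0)).2 * (fderiv ℝ u p (0,1)).1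
      - (fderiv ℝ u p (1,0)).1 * (fderiv ℝ u p (0,1)).2)
      = ∫ p in Icc (-R) R ×ˢ Ioo (0:ℝ) 1, ((fderiv ℝ u p (1,0)).2 * (fderiv ℝ u p (0,1)).1
      - (fderiv ℝ u p (1,0)).1 * (fderiv ℝ u p (0,1)).2) := by
    apply my_setIntegral_zero_off hOmega hBmeas (Set.prod_mono (subset_univ _) subset_rfl)
    intro p hp
    have hpA : p.2 ∈ Ioo (0:ℝ) 1 := hp.1.2
    have hx : p.1 ∉ Icc (-R) R := fun hx => hp.2 ⟨hx, hpA⟩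
    have hRx : R ≤ |p.1| := by
      rw [mem_Icc] at hx; push_neg at hx
      rcases le_or_gt (-R) p.1 with h|h
      · have h2 := hx h
        calc R ≤ p.1 := le_of_lt h2
        _ ≤ |p.1| := le_abs_self _
      · calc R ≤ -p.1 := by linarith
        _ ≤ |p.1| := neg_le_abs _
    have h0' := hzoff p hpA (hnotK p hRx)
    simp [h0']
  have hnull : volume ((Icc (-R) R ×ˢ Icc (0:ℝ) 1 : Set (ℝ×ℝ)) \ (Icc (-R) R ×ˢ Ioo (0:ℝ) 1)) = 0 := by
    have hsub : (Icc (-R) R ×ˢ Icc (0:ℝ) 1 : Set (ℝ×ℝ)) \ (Icc (-R) R ×ˢ Ioo (0:ℝ) 1)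
        ⊆ (univ : Set ℝ) ×ˢ ({0,1} : Set ℝ) := by
      rintro ⟨x,y⟩ ⟨⟨hx, hy⟩, hne⟩
      refine ⟨trivial, ?_⟩
      rcases eq_or_lt_of_le hy.1 with h|h
      · exact Or.inl h.symm
      rcases eq_or_lt_of_le hy.2 with h2|h2
      · exact Or.inr h2
      · exact absurd (⟨hx, h, h2⟩ : (x,y) ∈ Icc (-R) R ×ˢ Ioo (0:ℝ) 1) hne
    refine measure_mono_null hsub ?_
    rw [MeasureTheory.Measure.volume_eq_prod, Measure.prod_prod]
    have h2 : volume ({0,1} : Set ℝ) = 0 := Set.Finite.measure_zero (Set.toFinite _) _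
    rw [h2, mul_zero]
  have haeq : (Icc (-R) R ×ˢ Icc (0:ℝ) 1 : Set (ℝ×ℝ)) =ᵐ[volume] (Icc (-R) R ×ˢ Ioo (0:ℝ) 1) := by
    rw [MeasureTheory.ae_eq_set]
    refine ⟨hnull, ?_⟩
    rw [diff_eq_empty.mpr (Set.prod_mono subset_rfl Ioo_subset_Icc_self), measure_empty]
  rw [hstep1, ← MeasureTheory.setIntegral_congr_set haeq,
    show (Icc (-R) R ×ˢ Icc (0:ℝ) 1 : Set (ℝ×ℝ)) = Icc ((-R,0):ℝ×ℝ) ((R,1):ℝ×ℝ) from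
      (Icc_prod_eq ((-R,0):ℝ×ℝ) ((R,1):ℝ×ℝ)).symm]
  exact hIccEq

/-- Korn inequality `‖∇u‖²_{L²(Ω)} ≤ 8‖Du‖²_{L²(Ω)}` for `u ∈ 𝒱(Ω)`. -/
theorem stmt1 (u : ℝ × ℝ → ℝ × ℝ) (hu : memV u) :
    (∫ p in OmegaCh, gradSq u p) ≤ 8 * ∫ p in OmegaCh, symGradSq u p := by
  have key := key_ibp u hu
  obtain ⟨hsm, hdiv, h0, h1, K, hKc, hKsub, hKz⟩ := hu
  have hsm' : ContDiff ℝ ((⊤:ℕ∞) : WithTop ℕ∞) u := hsm.of_le (by simp)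
  have hsmD : ContDiff ℝ ((⊤:ℕ∞) : WithTop ℕ∞) (fderiv ℝ u) := (contDiff_infty_iff_fderiv.mp hsm').2
  have hcD : Continuous (fderiv ℝ u) := hsmD.continuous
  have hOmega : MeasurableSet OmegaCh := MeasurableSet.univ.prod measurableSet_Ioo
  have hzoff : ∀ p : ℝ×ℝ, p ∈ OmegaCh \ K → fderiv ℝ u p = 0 := by
    intro p hp
    have hopen : IsOpen ({q : ℝ×ℝ | q.2 ∈ Ioo (0:ℝ) 1} \ K) :=
      (isOpen_Ioo.preimage continuous_snd).sdiff hKc.isClosed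
    have hev : u =ᶠ[nhds p] (fun _ => 0) :=
      Filter.eventually_of_mem (hopen.mem_nhds ⟨hp.1.2, hp.2⟩)
        (fun q hq => hKz q ⟨⟨trivial, Ioo_subset_Icc_self hq.1⟩, hq.2⟩)
    rw [hev.fderiv_eq]; exact fderiv_const_apply 0
  have hcomp : ∀ v : ℝ×ℝ, Continuous (fun p : ℝ×ℝ => fderiv ℝ u p v) :=
    fun v => (ContinuousLinearMap.apply ℝ (ℝ×ℝ) v).continuous.comp hcD
  have hIG : ∀ h : ℝ×ℝ → ℝ, Continuous h → (∀ p : ℝ×ℝ, fderiv ℝ u p = 0 → h p = 0) →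
      IntegrableOn h OmegaCh := fun h hc hz =>
    my_integrableOn hOmega hKc h hc (fun p hp => hz p (hzoff p hp))
  have hIgrad : IntegrableOn (gradSq u) OmegaCh := by
    apply hIG
    · show Continuous fun p : ℝ×ℝ => ((fderiv ℝ u p (1,0)).1^2 + (fderiv ℝ u p (1,0)).2^2)
        + ((fderiv ℝ u p (0,1)).1^2 + (fderiv ℝ u p (0,1)).2^2)
      exact (((continuous_fst.comp (hcomp (1,0))).pow 2).add
          ((continuous_snd.comp (hcomp (1,0))).pow 2)).add
        (((continuous_fst.comp (hcomp (0,1))).pow 2).add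
          ((continuous_snd.comp (hcomp (0,1))).pow 2))
    · intro p hp; simp [gradSq, nsq2, pdX, pdY, hp]
  have hIsym : IntegrableOn (symGradSq u) OmegaCh := by
    apply hIG
    · show Continuous fun p : ℝ×ℝ => (fderiv ℝ u p (1,0)).1^2 + (fderiv ℝ u p (0,1)).2^2
        + (1/2) * ((fderiv ℝ u p (1,0)).2 + (fderiv ℝ u p (0,1)).1)^2
      exact (((continuous_fst.comp (hcomp (1,0))).pow 2).add
          ((continuous_snd.comp (hcomp (0,1))).pow 2)).add
        (continuous_const.mul (((continuous_snd.comp (hcomp (1,0))).add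
          (continuous_fst.comp (hcomp (0,1)))).pow 2))
    · intro p hp; simp [symGradSq, nsq2, pdX, pdY, hp]
  have hIG1 : IntegrableOn (fun p : ℝ×ℝ => 7*(fderiv ℝ u p (1,0)).1^2
      + 8*((fderiv ℝ u p (1,0)).1 * (fderiv ℝ u p (0,1)).2) + 7*(fderiv ℝ u p (0,1)).2^2
      + 3*(fderiv ℝ u p (1,0)).2^2 + 3*(fderiv ℝ u p (0,1)).1^2) OmegaCh := by
    apply hIG
    · exact ((((continuous_const.mul ((continuous_fst.comp (hcomp (1,0))).pow 2)).add
        (continuous_const.mul ((continuous_fst.comp (hcomp (1,0))).mul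
          (continuous_snd.comp (hcomp (0,1)))))).add
        (continuous_const.mul ((continuous_snd.comp (hcomp (0,1))).pow 2))).add
        (continuous_const.mul ((continuous_snd.comp (hcomp (1,0))).pow 2))).add
        (continuous_const.mul ((continuous_fst.comp (hcomp (0,1))).pow 2))
    · intro p hp; simp [hp]
  have hIbc : IntegrableOn (fun p : ℝ×ℝ => (fderiv ℝ u p (1,0)).2 * (fderiv ℝ u p (0,1)).1
      - (fderiv ℝ u p (1,0)).1 * (fderiv ℝ u p (0,1)).2) OmegaCh := by
    apply hIG
    · exact ((continuous_snd.comp (hcomp (1,0))).mul (continuous_fst.comp (hcomp (0,1)))).sub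
        ((continuous_fst.comp (hcomp (1,0))).mul (continuous_snd.comp (hcomp (0,1))))
    · intro p hp; simp [hp]
  have hptw8 : ∀ p : ℝ×ℝ, 8 * symGradSq u p = gradSq u p
      + ((7*(fderiv ℝ u p (1,0)).1^2
      + 8*((fderiv ℝ u p (1,0)).1 * (fderiv ℝ u p (0,1)).2) + 7*(fderiv ℝ u p (0,1)).2^2
      + 3*(fderiv ℝ u p (1,0)).2^2 + 3*(fderiv ℝ u p (0,1)).1^2)
      + 8 * ((fderiv ℝ u p (1,0)).2 * (fderiv ℝ u p (0,1)).1
      - (fderiv ℝ u p (1,0)).1 * (fderiv ℝ u p (0,1)).2)) := by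
    intro p
    simp only [symGradSq, gradSq, nsq2, pdX, pdY]
    ring
  have E1 : ∫ p in OmegaCh, (8:ℝ) * symGradSq u p
      = (∫ p in OmegaCh, gradSq u p)
      + ((∫ p in OmegaCh, (7*(fderiv ℝ u p (1,0)).1^2
      + 8*((fderiv ℝ u p (1,0)).1 * (fderiv ℝ u p (0,1)).2) + 7*(fderiv ℝ u p (0,1)).2^2
      + 3*(fderiv ℝ u p (1,0)).2^2 + 3*(fderiv ℝ u p (0,1)).1^2))
      + 8 * ∫ p in OmegaCh, ((fderiv ℝ u p (1,0)).2 * (fderiv ℝ u p (0,1)).1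
      - (fderiv ℝ u p (1,0)).1 * (fderiv ℝ u p (0,1)).2)) := by
    rw [← MeasureTheory.integral_const_mul]
    calc ∫ p in OmegaCh, 8 * symGradSq u p
        = ∫ p in OmegaCh, (gradSq u p
          + ((7*(fderiv ℝ u p (1,0)).1^2
          + 8*((fderiv ℝ u p (1,0)).1 * (fderiv ℝ u p (0,1)).2) + 7*(fderiv ℝ u p (0,1)).2^2
          + 3*(fderiv ℝ u p (1,0)).2^2 + 3*(fderiv ℝ u p (0,1)).1^2)
          + 8 * ((fderiv ℝ u p (1,0)).2 * (fderiv ℝ u p (0,1)).1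
          - (fderiv ℝ u p (1,0)).1 * (fderiv ℝ u p (0,1)).2))) := by simp only [hptw8]
      _ = _ := by
          have h8bc : IntegrableOn (fun p : ℝ×ℝ => 8 * ((fderiv ℝ u p (1,0)).2 * (fderiv ℝ u p (0,1)).1
              - (fderiv ℝ u p (1,0)).1 * (fderiv ℝ u p (0,1)).2)) OmegaCh := hIbc.const_mul 8
          have hsum : IntegrableOn (fun p : ℝ×ℝ => (7*(fderiv ℝ u p (1,0)).1^2
              + 8*((fderiv ℝ u p (1,0)).1 * (fderiv ℝ u p (0,1)).2) + 7*(fderiv ℝ u p (0,1)).2^2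
              + 3*(fderiv ℝ u p (1,0)).2^2 + 3*(fderiv ℝ u p (0,1)).1^2)
              + 8 * ((fderiv ℝ u p (1,0)).2 * (fderiv ℝ u p (0,1)).1
              - (fderiv ℝ u p (1,0)).1 * (fderiv ℝ u p (0,1)).2)) OmegaCh := hIG1.add h8bc
          rw [MeasureTheory.integral_add hIgrad hsum,
            MeasureTheory.integral_add hIG1 h8bc,
            MeasureTheory.integral_const_mul]
  have E0 : (8:ℝ) * ∫ p in OmegaCh, symGradSq u p = ∫ p in OmegaCh, (8:ℝ) * symGradSq u p :=
    (MeasureTheory.integral_const_mul 8 _).symm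
  have Epos : 0 ≤ ∫ p in OmegaCh, (7*(fderiv ℝ u p (1,0)).1^2
      + 8*((fderiv ℝ u p (1,0)).1 * (fderiv ℝ u p (0,1)).2) + 7*(fderiv ℝ u p (0,1)).2^2
      + 3*(fderiv ℝ u p (1,0)).2^2 + 3*(fderiv ℝ u p (0,1)).1^2) :=
    setIntegral_nonneg hOmega (fun p _ => by
      nlinarith [sq_nonneg ((fderiv ℝ u p (1,0)).1 + (fderiv ℝ u p (0,1)).2),
        sq_nonneg ((fderiv ℝ u p (1,0)).1 - (fderiv ℝ u p (0,1)).2),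
        sq_nonneg (fderiv ℝ u p (1,0)).2, sq_nonneg (fderiv ℝ u p (0,1)).1])
  linarith [key, E0, E1, Epos]
end
end

section
/- For each α > 0, the smallest positive root μ(α) of the equation μ cos μ + 8α sin μ = 0 in (0, π] is a continuous, strictly increasing function of α, with μ(α) → π/2 as α → 0⁺ and μ(α) → π as α → +∞. -/
open MeasureTheory Set Filter Real

noncomputable section

namespace Stmt7Aux

/-- Auxiliary function: `G m = -(m cos m) / (8 sin m)`. -/
def G (m : ℝ) : ℝ := -(m * Real.cos m) / (8 * Real.sin m)

lemma hG_mono : StrictMonoOn G (Ioo (π/2) π) := by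
  intro x hx y hy hxy
  obtain ⟨hx1, hx2⟩ := hx
  obtain ⟨hy1, hy2⟩ := hy
  have hpi := Real.pi_pos
  have hsx : 0 < Real.sin x := Real.sin_pos_of_pos_of_lt_pi (by linarith) hx2
  have hsy : 0 < Real.sin y := Real.sin_pos_of_pos_of_lt_pi (by linarith) hy2
  have hcx : Real.cos x < 0 := by
    have := Real.cos_lt_cos_of_nonneg_of_le_pi (x := π/2) (by linarith) hx2.le hx1
    simpa using this
  have hcy : Real.cos y < Real.cos x :=
    Real.cos_lt_cos_of_nonneg_of_le_pi (by linarith) hy2.le hxy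
  -- sin is strictly decreasing on (π/2, π)
  have hsin : Real.sin y < Real.sin x := by
    have h1 : Real.sin x = Real.cos (x - π/2) := by
      rw [Real.cos_sub_pi_div_two]
    have h2 : Real.sin y = Real.cos (y - π/2) := by
      rw [Real.cos_sub_pi_div_two]
    rw [h1, h2]
    exact Real.cos_lt_cos_of_nonneg_of_le_pi (by linarith) (by linarith) (by linarith)
  -- numerators and denominators
  have hnx : 0 < -(x * Real.cos x) := by nlinarith
  have hny : -(x * Real.cos x) < -(y * Real.cos y) := by nlinarith
  unfold G
  exact div_lt_div₀ hny (by linarith) (by nlinarith) (by positivity)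

lemma G_pos {m : ℝ} (hm : m ∈ Ioo (π/2) π) : 0 < G m := by
  obtain ⟨h1, h2⟩ := hm
  have hpi := Real.pi_pos
  have hs : 0 < Real.sin m := Real.sin_pos_of_pos_of_lt_pi (by linarith) h2
  have hc : Real.cos m < 0 := by
    have := Real.cos_lt_cos_of_nonneg_of_le_pi (x := π/2) (by linarith) h2.le h1
    simpa using this
  have : 0 < -(m * Real.cos m) := by nlinarith
  exact div_pos this (by linarith)

/-- The set of roots. -/
def S (α : ℝ) : Set ℝ :=
  {m : ℝ | 0 < m ∧ m ≤ π ∧ m * Real.cos m + 8 * α * Real.sin m = 0}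

lemma S_subset {α : ℝ} (hα : 0 < α) : S α ⊆ Ioo (π/2) π := by
  rintro m ⟨hm0, hmπ, heq⟩
  have hpi := Real.pi_pos
  constructor
  · by_contra h
    push_neg at h
    have hmlt : m < π/2 := by
      rcases lt_or_eq_of_le h with h' | h'
      · exact h'
      · exfalso
        rw [h'] at heq
        rw [Real.cos_pi_div_two, Real.sin_pi_div_two] at heq
        nlinarith
    have hc : 0 < Real.cos m := Real.cos_pos_of_mem_Ioo ⟨by linarith, hmlt⟩
    have hs : 0 < Real.sin m := Real.sin_pos_of_pos_of_lt_pi hm0 (by linarith)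
    nlinarith
  · rcases lt_or_eq_of_le hmπ with h' | h'
    · exact h'
    · exfalso
      rw [h'] at heq
      rw [Real.cos_pi, Real.sin_pi] at heq
      nlinarith

lemma mem_S_iff {α m : ℝ} (hm : m ∈ Ioo (π/2) π) :
    m ∈ S α ↔ G m = α := by
  obtain ⟨h1, h2⟩ := hm
  have hpi := Real.pi_pos
  have hs : 0 < Real.sin m := Real.sin_pos_of_pos_of_lt_pi (by linarith) h2
  constructor
  · rintro ⟨_, _, heq⟩
    unfold G
    field_simp
    linarith
  · intro h
    refine ⟨by linarith, h2.le, ?_⟩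
    unfold G at h
    field_simp at h
    linarith

/-- The root function. -/
def μ (α : ℝ) : ℝ := sInf (S α)

lemma hμ_spec {α : ℝ} (hα : 0 < α) :
    μ α ∈ Ioo (π/2) π ∧ G (μ α) = α ∧ IsLeast (S α) (μ α) := by
  have hpi := Real.pi_pos
  -- existence via IVT
  have hcont : ContinuousOn (fun m => m * Real.cos m + 8 * α * Real.sin m) (Icc (π/2) π) :=
    (Continuous.add (continuous_id.mul Real.continuous_cos)
      (continuous_const.mul Real.continuous_sin)).continuousOn
  have hivt := intermediate_value_Ioo' (a := π/2) (b := π) (by linarith) hcont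
  have h0 : (0:ℝ) ∈ Ioo ((fun m => m * Real.cos m + 8 * α * Real.sin m) π)
      ((fun m => m * Real.cos m + 8 * α * Real.sin m) (π/2)) := by
    simp [Real.cos_pi, Real.sin_pi, Real.cos_pi_div_two, Real.sin_pi_div_two]
    constructor <;> nlinarith
  obtain ⟨m₀, hm₀, heq₀⟩ := hivt h0
  have hm₀S : m₀ ∈ S α := (mem_S_iff hm₀).2 (by
    have := (mem_S_iff (α := α) hm₀)
    -- directly: m₀ satisfies equation
    have hmem : m₀ ∈ S α := ⟨by linarith [hm₀.1], hm₀.2.le, heq₀⟩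
    exact (mem_S_iff hm₀).1 hmem)
  have hGm₀ : G m₀ = α := (mem_S_iff hm₀).1 hm₀S
  -- uniqueness
  have huniq : S α = {m₀} := by
    apply Set.eq_singleton_iff_unique_mem.2
    refine ⟨hm₀S, fun m hm => ?_⟩
    have hmI := S_subset hα hm
    have hGm : G m = α := (mem_S_iff hmI).1 hm
    exact hG_mono.injOn hmI hm₀ (by rw [hGm, hGm₀])
  have hμ : μ α = m₀ := by rw [μ, huniq, csInf_singleton]
  rw [hμ]
  exact ⟨hm₀, hGm₀, by rw [huniq]; exact ⟨rfl, fun m hm => le_of_eq hm.symm⟩⟩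

lemma lt_iff {α m : ℝ} (hα : 0 < α) (hm : m ∈ Ioo (π/2) π) :
    μ α < m ↔ α < G m := by
  obtain ⟨hμI, hGμ, _⟩ := hμ_spec hα
  conv_rhs => rw [← hGμ]
  exact (hG_mono.lt_iff_lt hμI hm).symm

lemma gt_iff {α m : ℝ} (hα : 0 < α) (hm : m ∈ Ioo (π/2) π) :
    m < μ α ↔ G m < α := by
  obtain ⟨hμI, hGμ, _⟩ := hμ_spec hα
  conv_rhs => rw [← hGμ]
  exact (hG_mono.lt_iff_lt hm hμI).symm

end Stmt7Aux

open Stmt7Aux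

/-- the smallest positive root `μ(α)` of `μ cos μ + 8α sin μ = 0` in `(0, π]`
is continuous and strictly increasing in `α`, with limits `π/2` at `0⁺` and `π` at `+∞`. -/
theorem stmt7 :
    ∃ μ : ℝ → ℝ,
      (∀ α : ℝ, 0 < α →
        IsLeast {m : ℝ | 0 < m ∧ m ≤ π ∧ m * Real.cos m + 8 * α * Real.sin m = 0} (μ α)) ∧
      StrictMonoOn μ (Ioi (0:ℝ)) ∧ ContinuousOn μ (Ioi (0:ℝ)) ∧
      Tendsto μ (nhdsWithin 0 (Ioi (0:ℝ))) (nhds (π / 2)) ∧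
      Tendsto μ atTop (nhds π) := by
  have hpi := Real.pi_pos
  refine ⟨Stmt7Aux.μ, fun α hα => (hμ_spec hα).2.2, ?_, ?_, ?_, ?_⟩
  · -- strict mono
    intro a ha b hb hab
    obtain ⟨haI, hGa, _⟩ := hμ_spec (mem_Ioi.1 ha)
    obtain ⟨hbI, hGb, _⟩ := hμ_spec (mem_Ioi.1 hb)
    have : G (Stmt7Aux.μ a) < G (Stmt7Aux.μ b) := by rw [hGa, hGb]; exact hab
    exact (hG_mono.lt_iff_lt haI hbI).1 this
  · -- continuity
    intro β hβ
    have hβ' : 0 < β := mem_Ioi.1 hβ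
    obtain ⟨hβI, hGβ, _⟩ := hμ_spec hβ'
    apply ContinuousWithinAt.mono (t := Ioi (0:ℝ)) ?_ (le_refl _)
    rw [ContinuousWithinAt, tendsto_order]
    constructor
    · intro a ha
      rcases le_or_gt a (π/2) with h | h
      · filter_upwards [self_mem_nhdsWithin] with α hα
        exact lt_of_le_of_lt h (hμ_spec (mem_Ioi.1 hα)).1.1
      · have haI : a ∈ Ioo (π/2) π := ⟨h, lt_trans ha hβI.2⟩
        have hGa : G a < β := by rw [← hGβ]; exact hG_mono haI hβI ha
        have hev : ∀ᶠ α in nhdsWithin β (Ioi 0), G a < α :=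
          eventually_nhdsWithin_of_eventually_nhds (eventually_gt_nhds hGa)
        filter_upwards [hev, self_mem_nhdsWithin] with α h1 h2
        exact (gt_iff (mem_Ioi.1 h2) haI).2 h1
    · intro b hb
      rcases le_or_gt π b with h | h
      · filter_upwards [self_mem_nhdsWithin] with α hα
        exact lt_of_lt_of_le (hμ_spec (mem_Ioi.1 hα)).1.2 h
      · have hbI : b ∈ Ioo (π/2) π := ⟨lt_trans hβI.1 hb, h⟩
        have hGb : β < G b := by rw [← hGβ]; exact hG_mono hβI hbI hb
        have hev : ∀ᶠ α in nhdsWithin β (Ioi 0), α < G b :=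
          eventually_nhdsWithin_of_eventually_nhds (eventually_lt_nhds hGb)
        filter_upwards [hev, self_mem_nhdsWithin] with α h1 h2
        exact (lt_iff (mem_Ioi.1 h2) hbI).2 h1
  · -- limit at 0⁺
    rw [tendsto_order]
    constructor
    · intro a ha
      filter_upwards [self_mem_nhdsWithin] with α hα
      exact lt_of_lt_of_le ha (le_of_lt (hμ_spec (mem_Ioi.1 hα)).1.1)
    · intro b hb
      set m := min b π
      have hmI : (π/2 + m)/2 ∈ Ioo (π/2) π := by
        constructor
        · have : π/2 < m := lt_min hb (by linarith)
          linarith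
        · have : m ≤ π := min_le_right _ _
          have : π/2 < m := lt_min hb (by linarith)
          linarith [min_le_right b π]
      have hGm : 0 < G ((π/2 + m)/2) := G_pos hmI
      have hev : ∀ᶠ α in nhdsWithin (0:ℝ) (Ioi 0), α < G ((π/2 + m)/2) :=
        eventually_nhdsWithin_of_eventually_nhds (eventually_lt_nhds hGm)
      filter_upwards [hev, self_mem_nhdsWithin] with α h1 h2
      have : Stmt7Aux.μ α < (π/2 + m)/2 := (lt_iff (mem_Ioi.1 h2) hmI).2 h1
      have hmb : (π/2 + m)/2 < b := by
        have h1' : π/2 < b := hb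
        have h2' : m ≤ b := min_le_left _ _
        have h3' : π/2 < m := lt_min hb (by linarith)
        rcases le_or_gt b π with hbπ | hbπ
        · have : m = b := min_eq_left hbπ
          rw [this]; linarith
        · have : m = π := min_eq_right hbπ.le
          rw [this]; linarith
      linarith
  · -- limit at +∞
    rw [tendsto_order]
    constructor
    · intro a ha
      rcases le_or_gt a (π/2) with h | h
      · filter_upwards [eventually_gt_atTop 0] with α hα
        exact lt_of_le_of_lt h (hμ_spec hα).1.1
      · have haI : a ∈ Ioo (π/2) π := ⟨h, ha⟩
        filter_upwards [eventually_gt_atTop (max (G a) 0)] with α hα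
        have hα0 : 0 < α := lt_of_le_of_lt (le_max_right _ _) hα
        have : G a < α := lt_of_le_of_lt (le_max_left _ _) hα
        exact (gt_iff hα0 haI).2 this
    · intro b hb
      filter_upwards [eventually_gt_atTop 0] with α hα
      exact lt_of_lt_of_le (hμ_spec hα).1.2 hb.le
end
end
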